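/- arXiv:1912.01104 — 2 statements merged into one kernel-verified Lean document; each statement's English description precedes it below -/
import Mathlib

section
/- Let n > 2 and m > 2 be integers. Then the ring 𝕋ₙ(𝔽₂) of n×n upper triangular matrices over 𝔽₂ is m-torsion clean if and only if both of the following hold: (1) n ≤ k₁(m), and (2) n > k₁(u) for every integer u with 2 < u ≤ m − 1 (equivalently, 𝕋ₙ(𝔽₂) is not almost u-torsion clean for any u < m). -/
def AlmostTorsionClean (R : Type*) [Ring R] (m : ℕ) : Prop :=
  ∀ r : R, ∃ u e : R, IsUnit u ∧ u ^ m = 1 ∧ e * e = e ∧ r = u + e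

def TorsionClean (R : Type*) [Ring R] (m : ℕ) : Prop :=
  AlmostTorsionClean R m ∧ ∀ k : ℕ, 0 < k → k < m → ¬ AlmostTorsionClean R k

/-- The ring of n×n upper triangular matrices over 𝔽₂, as a subring of the full matrix ring. -/
def Triangular (n : ℕ) : Subring (Matrix (Fin n) (Fin n) (ZMod 2)) where
  carrier := {A | A.BlockTriangular id}
  zero_mem' := Matrix.blockTriangular_zero
  one_mem' := Matrix.blockTriangular_one
  add_mem' := fun ha hb => ha.add hb
  neg_mem' := fun ha => ha.neg
  mul_mem' := fun ha hb => ha.mul hb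

/-- `k1 m` is the smallest `k` with `1 ≤ k ≤ m` such that `C(m, k)` is odd. -/
noncomputable def k1 (m : ℕ) : ℕ := sInf {k | 1 ≤ k ∧ k ≤ m ∧ Odd (m.choose k)}

/-!
Over `𝔽₂`, every `r ∈ 𝕋ₙ(𝔽₂)` splits as `r = u + e` with `e = diag(rᵢᵢ + 1)` idempotent and
`u = 1 + N`, `N` strictly upper triangular, so `Nⁿ = 0`. Then `uᵐ = ∑ C(m, k) Nᵏ = 1` as soon as
`n ≤ k₁(m)`, because `C(m, k)` is even for `0 < k < k₁(m)`.

Conversely, units of `𝕋ₙ(𝔽₂)` have all-ones diagonal, so in any decomposition `1 + J = u + e`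
(`J` the nilpotent Jordan block) the idempotent `e` has zero diagonal, hence is nilpotent, hence
zero. Thus `u = 1 + J`, and the `(0, k₁(m))` entry of `(1 + J)ᵐ` is `C(m, k₁(m)) = 1`, so `uᵐ ≠ 1`
when `k₁(m) < n`.
-/

open Matrix Finset

theorem k1_spec {m : ℕ} (hm : 0 < m) : 1 ≤ k1 m ∧ k1 m ≤ m ∧ Odd (m.choose (k1 m)) :=
  Nat.sInf_mem (s := {k | 1 ≤ k ∧ k ≤ m ∧ Odd (m.choose k)}) ⟨m, hm, le_rfl, by simp⟩

theorem even_choose_of_lt_k1 {m k : ℕ} (hk : 0 < k) (hkm : k ≤ m) (hlt : k < k1 m) :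
    Even (m.choose k) := by
  by_contra hodd
  exact Nat.notMem_of_lt_sInf hlt ⟨hk, hkm, Nat.not_even_iff_odd.mp hodd⟩

theorem one_add_pow_eq_one_of_pow_eq_zero {R : Type*} [Semiring R] (h2 : (2 : R) = 0) {N : R}
    {n m : ℕ} (hN : N ^ n = 0) (hn : n ≤ k1 m) : (1 + N) ^ m = 1 := by
  rw [add_comm, (Commute.one_right N).add_pow, sum_eq_single 0]
  · simp
  · intro k hk hk0
    rcases lt_or_ge k n with hkn | hkn
    · obtain ⟨t, ht⟩ := even_choose_of_lt_k1 (Nat.pos_of_ne_zero hk0)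
        (Nat.lt_succ_iff.mp (mem_range.mp hk)) (hkn.trans_le hn)
      rw [ht, Nat.cast_add, ← two_mul, h2, zero_mul, mul_zero]
    · rw [pow_eq_zero_of_le hkn hN, zero_mul, zero_mul]
  · simp

namespace Matrix.IsUpperTriangular

variable {ι R : Type*} [CommRing R] [Fintype ι] [LinearOrder ι] {M : Matrix ι ι R}

theorem pow_card_eq_zero (hM : M.IsUpperTriangular) (hdiag : ∀ i, M i i = 0) :
    M ^ Fintype.card ι = 0 := by
  simpa [charpoly_of_isUpperTriangular M hM, hdiag] using aeval_self_charpoly M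

theorem isUnit_diag (hM : M.IsUpperTriangular) (hu : IsUnit M) (i : ι) : IsUnit (M i i) := by
  rw [isUnit_iff_isUnit_det, det_of_isUpperTriangular hM, IsUnit.prod_iff] at hu
  exact hu i (mem_univ i)

end Matrix.IsUpperTriangular

def shiftMatrix (n : ℕ) (R : Type*) [Zero R] [One R] : Matrix (Fin n) (Fin n) R :=
  of fun i j => if (i : ℕ) + 1 = j then 1 else 0

theorem shiftMatrix_isUpperTriangular (n : ℕ) (R : Type*) [Zero R] [One R] :
    (shiftMatrix n R).IsUpperTriangular := fun i j (hji : j < i) =>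
  if_neg (by omega)

theorem shiftMatrix_pow_apply {R : Type*} [Semiring R] (n k : ℕ) (i j : Fin n) :
    (shiftMatrix n R ^ k) i j = if (i : ℕ) + k = j then 1 else 0 := by
  induction k generalizing i j with
  | zero => simp [one_apply, Fin.ext_iff]
  | succ k ih =>
    simp only [pow_succ', mul_apply, ih]
    simp only [shiftMatrix, of_apply]
    rw [Fin.sum_univ_eq_sum_range (fun l => (if (i : ℕ) + 1 = l then (1 : R) else 0) *
      if l + k = j then 1 else 0)]
    simp only [ite_mul, one_mul, zero_mul, sum_ite_eq, mem_range]
    have := j.is_lt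
    split_ifs <;> first | rfl | omega

theorem one_add_shiftMatrix_pow_apply {R : Type*} [Semiring R] {n m k : ℕ} {i j : Fin n}
    (hij : (j : ℕ) = i + k) : ((1 + shiftMatrix n R) ^ m) i j = m.choose k := by
  rw [add_comm, (Commute.one_right _).add_pow, Matrix.sum_apply]
  simp +contextual [← nsmul_eq_mul', shiftMatrix_pow_apply, hij, Nat.choose_eq_zero_of_lt]

namespace Triangular

variable {n : ℕ}

theorem isUpperTriangular (A : Triangular n) :
    (A : Matrix (Fin n) (Fin n) (ZMod 2)).IsUpperTriangular :=
  A.2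

theorem diag_eq_one_of_isUnit {u : Triangular n} (hu : IsUnit u) (i : Fin n) :
    (u : Matrix (Fin n) (Fin n) (ZMod 2)) i i = 1 := by
  have hne := ((isUpperTriangular u).isUnit_diag (hu.map (Triangular n).subtype) i).ne_zero
  generalize (u : Matrix (Fin n) (Fin n) (ZMod 2)) i i = a at hne ⊢
  revert a
  decide

theorem eq_zero_of_isIdempotentElem {e : Triangular n} (he : IsIdempotentElem e)
    (hdiag : ∀ i, (e : Matrix (Fin n) (Fin n) (ZMod 2)) i i = 0) : e = 0 :=
  he.eq_zero_of_isNilpotent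
    ⟨n, Subtype.ext (by simpa using (isUpperTriangular e).pow_card_eq_zero hdiag)⟩

end Triangular

theorem almostTorsionClean_triangular_of_le_k1 {n m : ℕ} (h : n ≤ k1 m) :
    AlmostTorsionClean (Triangular n) m := by
  intro r
  let e : Triangular n :=
    ⟨diagonal fun i => (r : Matrix (Fin n) (Fin n) (ZMod 2)) i i + 1, blockTriangular_diagonal _⟩
  let N := r - e - 1
  have hN : (N : Matrix (Fin n) (Fin n) (ZMod 2)) ^ n = 0 := by
    simpa using (Triangular.isUpperTriangular N).pow_card_eq_zero fun i => by simp [N, e]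
  have h2 : (2 : Matrix (Fin n) (Fin n) (ZMod 2)) = 0 := by
    ext i j
    simp [ofNat_apply, show (2 : ZMod 2) = 0 from rfl]
  refine ⟨1 + N, e, IsNilpotent.isUnit_one_add ⟨n, Subtype.ext (by simpa using hN)⟩,
    Subtype.ext ?_, Subtype.ext ?_, by simp only [N]; abel⟩
  · simpa using one_add_pow_eq_one_of_pow_eq_zero h2 hN h
  · have hidem : ∀ a : ZMod 2, (a + 1) * (a + 1) = a + 1 := by decide
    simp [e, hidem]

theorem le_k1_of_almostTorsionClean_triangular {n m : ℕ} (hm : 0 < m)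
    (h : AlmostTorsionClean (Triangular n) m) : n ≤ k1 m := by
  obtain ⟨hk1, -, hodd⟩ := k1_spec hm
  by_contra! hlt
  let J : Triangular n := ⟨shiftMatrix n (ZMod 2), shiftMatrix_isUpperTriangular n _⟩
  obtain ⟨u, e, hu, hum, he, hr⟩ := h (1 + J)
  have he0 : e = 0 := Triangular.eq_zero_of_isIdempotentElem he fun i => by
    have hii := congr_fun (congr_fun (congrArg Subtype.val hr) i) i
    simpa [J, shiftMatrix, Triangular.diag_eq_one_of_isUnit hu i] using hii
  rw [he0, add_zero] at hr
  have hentry := congr_fun (congr_fun (congrArg Subtype.val (hr ▸ hum)) ⟨0, by omega⟩) ⟨k1 m, hlt⟩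
  push_cast at hentry
  rw [one_add_shiftMatrix_pow_apply (k := k1 m) (by simp), one_apply_ne (by simp; omega),
    ZMod.natCast_eq_one_iff_odd.mpr hodd] at hentry
  exact one_ne_zero hentry

theorem almostTorsionClean_triangular_iff {n m : ℕ} (hm : 0 < m) :
    AlmostTorsionClean (Triangular n) m ↔ n ≤ k1 m :=
  ⟨le_k1_of_almostTorsionClean_triangular hm, almostTorsionClean_triangular_of_le_k1⟩

theorem Tn_F2_m_torsion_clean_iff (n m : ℕ) (hn : 2 < n) (hm : 2 < m) :
    TorsionClean (Triangular n) m ↔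
      (n ≤ k1 m ∧ ∀ u : ℕ, 2 < u → u ≤ m - 1 → k1 u < n) := by
  unfold TorsionClean
  rw [almostTorsionClean_triangular_iff (by omega)]
  refine and_congr_right fun _ => ⟨fun h u hu hum => ?_, fun h k hk hkm => ?_⟩
  · simpa [almostTorsionClean_triangular_iff (show 0 < u by omega)] using h u (by omega) (by omega)
  · rw [almostTorsionClean_triangular_iff hk, not_le]
    rcases le_or_gt k 2 with hk2 | hk2
    · exact (k1_spec hk).2.1.trans_lt (by omega)
    · exact h k hk2 (by omega)
end

section
/- Let n > 2 be an integer. Then the ring 𝕋ₙ(𝔽₂) of n×n upper triangular matrices over 𝔽₂ is n-torsion clean if and only if n = 2ˡ for some integer l ≥ 2. -/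
/-! Units of 𝕋ₙ(𝔽₂) are exactly the matrices `1 + N` with `N` strictly upper triangular; since
`Nⁿ = 0` and the characteristic is 2, they satisfy `u ^ 2 ^ k = 1` as soon as `n ≤ 2 ^ k`.
Subtracting the diagonal idempotent `diag (1 + rᵢᵢ)` from any `r` leaves such a unit, so 𝕋ₙ(𝔽₂)
is almost `m`-torsion clean when `n ≤ 2 ^ v₂(m)`. Conversely, in a decomposition `J = u + e` of
the shift matrix the idempotent `e` has unit diagonal, so `e = 1` and `u = 1 + J`. The order of
`1 + J` is a power of 2 dividing `m`, hence `(1 + J) ^ 2 ^ v₂(m) = 1 + J ^ 2 ^ v₂(m) = 1`, which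
forces `n ≤ 2 ^ v₂(m)`. So the least `m` that works is the least `m` with `n ≤ 2 ^ v₂(m)`, and
this least `m` is `n` exactly when `n` is a power of 2. -/

open Polynomial

theorem pow_ordProj_eq_one_of_pow_eq_one {M : Type*} [Monoid M] {x : M} {p N m : ℕ}
    (hp : p.Prime) (hN : x ^ p ^ N = 1) (hm : x ^ m = 1) (hm0 : m ≠ 0) :
    x ^ p ^ m.factorization p = 1 := by
  obtain ⟨c, -, hc⟩ := (Nat.dvd_prime_pow hp).1 (orderOf_dvd_of_pow_eq_one hN)
  have hcm : c ≤ m.factorization p :=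
    (hp.pow_dvd_iff_le_factorization hm0).1 (hc ▸ orderOf_dvd_of_pow_eq_one hm)
  exact orderOf_dvd_iff_pow_eq_one.1 (hc ▸ pow_dvd_pow p hcm)

namespace Matrix

section UpperTriangular

variable {ι R : Type*} [Fintype ι] [DecidableEq ι] [LinearOrder ι] [CommRing R]

theorem IsUpperTriangular.pow_card_eq_zero_s17 {N : Matrix ι ι R} (hN : N.IsUpperTriangular)
    (hdiag : ∀ i, N i i = 0) : N ^ Fintype.card ι = 0 := by
  -- Cayley–Hamilton, the characteristic polynomial being `X ^ card ι`
  simpa [charpoly_of_isUpperTriangular N hN, hdiag] using aeval_self_charpoly N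

theorem IsUpperTriangular.pow_char_pow_eq_one (p : ℕ) [Fact p.Prime] [CharP R p]
    {M : Matrix ι ι R} (hM : M.IsUpperTriangular) (hdiag : ∀ i, M i i = 1) {k : ℕ}
    (hk : Fintype.card ι ≤ p ^ k) : M ^ p ^ k = 1 := by
  cases isEmpty_or_nonempty ι
  · exact Subsingleton.elim _ _
  have hN : (M - 1) ^ Fintype.card ι = 0 :=
    IsUpperTriangular.pow_card_eq_zero_s17 (hM.sub blockTriangular_one) fun i => by simp [hdiag]
  calc M ^ p ^ k = (1 + (M - 1)) ^ p ^ k := by rw [add_sub_cancel]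
    _ = 1 + (M - 1) ^ p ^ k := by
      rw [add_pow_char_pow_of_commute p k (Commute.one_left _), one_pow]
    _ = 1 := by rw [pow_eq_zero_of_le hk hN, add_zero]

theorem IsUpperTriangular.isUnit_iff_diag_eq_one [Subsingleton Rˣ] {M : Matrix ι ι R}
    (hM : M.IsUpperTriangular) : IsUnit M ↔ ∀ i, M i i = 1 := by
  simp_rw [isUnit_iff_isUnit_det, det_of_isUpperTriangular hM, IsUnit.prod_iff, isUnit_iff_eq_one,
    Finset.mem_univ, true_implies]

end UpperTriangular

section Shift

variable (R : Type*) [Semiring R] (n : ℕ)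

def shift : Matrix (Fin n) (Fin n) R :=
  of fun i j => if (i : ℕ) + 1 = j then 1 else 0

theorem isUpperTriangular_shift : (shift R n).IsUpperTriangular :=
  fun i j hij => if_neg (by simp only [id] at hij; omega)

theorem shift_pow_apply (t : ℕ) (i j : Fin n) :
    (shift R n ^ t) i j = if (i : ℕ) + t = j then 1 else 0 := by
  induction t generalizing j with
  | zero => simp [one_apply, Fin.ext_iff]
  | succ t ih =>
    rw [pow_succ, mul_apply]
    simp_rw [ih, shift, of_apply, mul_ite, mul_one, mul_zero, ← ite_and]
    split_ifs with h
    · rw [Finset.sum_eq_single ⟨i + t, by omega⟩ (fun x _ hx => if_neg fun h' => hx (Fin.ext (by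
        simp only; omega))) (by simp)]
      exact if_pos ⟨by simp only; omega, rfl⟩
    · exact Finset.sum_eq_zero fun x _ => if_neg (by omega)

end Shift

end Matrix

namespace Triangular

variable {n : ℕ}

local notation "Mat" n => Matrix (Fin n) (Fin n) (ZMod 2)

theorem isUpperTriangular_s17 (x : Triangular n) : (x : Mat n).IsUpperTriangular := x.2

theorem pow_two_pow_eq_one {x : Triangular n} (hx : ∀ i, (x : Mat n) i i = 1) {k : ℕ}
    (hk : n ≤ 2 ^ k) : x ^ 2 ^ k = 1 :=
  Subtype.ext <| by
    simpa using (isUpperTriangular_s17 x).pow_char_pow_eq_one 2 hx (by simpa using hk)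

theorem isUnit_iff_diag_eq_one (x : Triangular n) : IsUnit x ↔ ∀ i, (x : Mat n) i i = 1 :=
  ⟨fun hx => (isUpperTriangular_s17 x).isUnit_iff_diag_eq_one.1 (hx.map (Triangular n).subtype),
    fun hx => IsUnit.of_pow_eq_one (pow_two_pow_eq_one hx Nat.lt_two_pow_self.le) (by positivity)⟩

theorem pow_two_pow_eq_one_of_isUnit {x : Triangular n} (hx : IsUnit x) {k : ℕ}
    (hk : n ≤ 2 ^ k) : x ^ 2 ^ k = 1 :=
  pow_two_pow_eq_one ((isUnit_iff_diag_eq_one x).1 hx) hk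

theorem almostTorsionClean_of_le {m : ℕ} (h : n ≤ 2 ^ m.factorization 2) :
    AlmostTorsionClean (Triangular n) m := by
  intro r
  let e : Triangular n :=
    ⟨Matrix.diagonal fun i => 1 + (r : Mat n) i i, Matrix.blockTriangular_diagonal _⟩
  have hu : ∀ i, ((r - e : Triangular n) : Mat n) i i = 1 := fun i => by simp [e]
  refine ⟨r - e, e, (isUnit_iff_diag_eq_one _).2 hu, ?_, ?_, (sub_add_cancel r e).symm⟩
  · obtain ⟨q, hq⟩ := Nat.ordProj_dvd m 2
    rw [hq, pow_mul, pow_two_pow_eq_one hu h, one_pow]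
  · ext : 1
    simp only [e, MulMemClass.coe_mul, Matrix.diagonal_mul_diagonal]
    simp_rw [← sq, ZMod.pow_card]

theorem le_of_almostTorsionClean {m : ℕ} (hm : m ≠ 0)
    (h : AlmostTorsionClean (Triangular n) m) : n ≤ 2 ^ m.factorization 2 := by
  by_contra! hlt
  let J : Triangular n := ⟨Matrix.shift (ZMod 2) n, Matrix.isUpperTriangular_shift _ _⟩
  obtain ⟨u, e, hu, hum, he, hJ⟩ := h J
  have he1 : e = 1 := by
    refine (IsIdempotentElem.iff_eq_one_of_isUnit ((isUnit_iff_diag_eq_one e).2 fun i => ?_)).1 he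
    have hJi : (J : Mat n) i i = 0 := if_neg (by omega)
    have := congrArg (fun x : Triangular n => (x : Mat n) i i) hJ
    simp only [Subring.coe_add, Matrix.add_apply, hJi, (isUnit_iff_diag_eq_one u).1 hu i] at this
    grind
  have hu' : u ^ 2 ^ m.factorization 2 = 1 :=
    pow_ordProj_eq_one_of_pow_eq_one Nat.prime_two
      (pow_two_pow_eq_one_of_isUnit hu Nat.lt_two_pow_self.le) hum hm
  have : NeZero n := ⟨(Nat.zero_lt_of_lt hlt).ne'⟩
  have hshift : (Matrix.shift (ZMod 2) n + 1) ^ 2 ^ m.factorization 2 = 1 := by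
    rw [eq_sub_of_add_eq hJ.symm, he1] at hu'
    simpa [J, CharTwo.sub_eq_add] using congrArg Subtype.val hu'
  rw [add_pow_char_pow_of_commute 2 _ (Commute.one_right _), one_pow, add_eq_right] at hshift
  simpa [Matrix.shift_pow_apply] using
    congrFun (congrFun hshift ⟨0, Nat.zero_lt_of_lt hlt⟩) ⟨_, hlt⟩

theorem almostTorsionClean_iff {m : ℕ} (hm : m ≠ 0) :
    AlmostTorsionClean (Triangular n) m ↔ n ≤ 2 ^ m.factorization 2 :=
  ⟨le_of_almostTorsionClean hm, almostTorsionClean_of_le⟩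

end Triangular

theorem Tn_F2_n_torsion_clean_iff (n : ℕ) (hn : 2 < n) :
    TorsionClean (Triangular n) n ↔ ∃ l : ℕ, 2 ≤ l ∧ n = 2 ^ l := by
  constructor
  · rintro ⟨hclean, -⟩
    have hle := (Triangular.almostTorsionClean_iff (by omega)).1 hclean
    have hn_eq : 2 ^ n.factorization 2 = n := (Nat.ordProj_le 2 (by omega)).antisymm hle
    refine ⟨n.factorization 2, ?_, hn_eq.symm⟩
    by_contra! hl
    have := Nat.pow_le_pow_right two_pos (Nat.le_of_lt_succ hl)
    omega
  · rintro ⟨l, -, rfl⟩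
    refine ⟨(Triangular.almostTorsionClean_iff (by positivity)).2 ?_, fun k hk hkn hclean => ?_⟩
    · simp [Nat.prime_two.factorization_self]
    · have := (Triangular.almostTorsionClean_iff hk.ne').1 hclean
      have := Nat.ordProj_le 2 hk.ne'
      omega
end
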